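/- arXiv:2301.00967 — 2 statements merged into one kernel-verified Lean document; each statement's English description precedes it below -/
import Mathlib

section
/- Under the setting of the previous statement (independence null, centered bounded kernels), Var(T̃_n) = n^{-1}Var(K̃(x,x)L̃(y,y)) + 2(1 - n^{-1})·E[K̃²(x,x')]·E[L̃²(y,y')], where (x',y') is an independent copy of (x,y). In particular, Var(T̃_n) = 2M₂N₂ + O(n^{-1}) with M₂ = E[K̃²(x,x')] and N₂ = E[L̃²(y,y')]. -/
/-!
Put `F((x, y), (x', y')) = K̃(x, x') L̃(y, y')`: a bounded symmetric kernel on `X × Y` which is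
degenerate for `Px ⊗ Py`, i.e. integrating out one argument gives `0`. Expand
`Var(∑ᵢⱼ F(wᵢ, wⱼ))` into the covariances `cov(F(wᵢ, wⱼ), F(wₖ, wₗ))`. A term in which some index
occurs only once vanishes: that sample is independent of the others, and integrating it out first
kills the term by degeneracy. The terms `i = j ≠ k = l` vanish by independence. What is left are
the `n` terms `i = j = k = l`, each equal to `Var F(w, w)`, and the `2n(n - 1)` terms with
`{k, l} = {i, j}`, `i ≠ j`, each equal to `E F(w, w')² = M₂ N₂`.
-/

open MeasureTheory ProbabilityTheory

theorem ProbabilityTheory.IndepFun.integral_eq_zero_of_integral_snd_eq_zero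
    {Ω W Z : Type*} [MeasurableSpace Ω] [MeasurableSpace W] [MeasurableSpace Z]
    {μ : Measure Ω} [IsFiniteMeasure μ] {V : Ω → W} {U : Ω → Z}
    (hVU : IndepFun V U μ) (hV : Measurable V) (hU : Measurable U)
    {H : W × Z → ℝ} (hH : Integrable H ((μ.map V).prod (μ.map U)))
    (hzero : ∀ v, ∫ z, H (v, z) ∂(μ.map U) = 0) :
    ∫ ω, H (V ω, U ω) ∂μ = 0 := by
  have hmap := hVU.map_prod_eq_prod_map_map hV.aemeasurable hU.aemeasurable
  rw [← integral_map (hV.prodMk hU).aemeasurable (hmap ▸ hH.aestronglyMeasurable), hmap,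
    integral_prod _ hH]
  simp [hzero]

theorem ProbabilityTheory.iIndepFun.indepFun_prodMk_prodMk_of_ne {Ω ι β : Type*}
    [MeasurableSpace Ω] [MeasurableSpace β] {μ : Measure Ω} {f : ι → Ω → β}
    (h : iIndepFun f μ) (hf : ∀ i, Measurable (f i)) {i j k m : ι}
    (hi : i ≠ m) (hj : j ≠ m) (hk : k ≠ m) :
    IndepFun (fun ω => ((f i ω, f j ω), f k ω)) (f m) μ := by
  classical
  have hST : Disjoint ({i, j, k} : Finset ι) {m} := by simp [hi.symm, hj.symm, hk.symm]
  have hφ : Measurable fun v : ({i, j, k} : Finset ι) → β =>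
      ((v ⟨i, by simp⟩, v ⟨j, by simp⟩), v ⟨k, by simp⟩) := by fun_prop
  have hψ : Measurable fun u : ({m} : Finset ι) → β => u ⟨m, by simp⟩ := measurable_pi_apply _
  exact (h.indepFun_finset _ _ hST hf).comp hφ hψ

theorem abs_mul_le_of_abs_le {a b A B : ℝ} (ha : |a| ≤ A) (hb : |b| ≤ B) : |a * b| ≤ A * B :=
  abs_mul a b ▸ mul_le_mul ha hb (abs_nonneg b) ((abs_nonneg a).trans ha)

theorem sum_ite_diag_add_ite_offDiag_pair {ι : Type*} [Fintype ι] [DecidableEq ι] (A R : ℝ) :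
    ∑ i : ι, ∑ j : ι, ∑ k : ι, ∑ l : ι,
      ((if i = j ∧ j = k ∧ k = l then A else 0) +
        (if i ≠ j ∧ (k = i ∧ l = j ∨ k = j ∧ l = i) then R else 0)) =
      Fintype.card ι * A + 2 * (Fintype.card ι * (Fintype.card ι - 1)) * R := by
  have hpair : ∀ i j k l : ι, (if i ≠ j ∧ (k = i ∧ l = j ∨ k = j ∧ l = i) then R else 0) =
      (if i ≠ j ∧ k = i ∧ l = j then R else 0) + (if i ≠ j ∧ k = j ∧ l = i then R else 0) := by
    intro i j k l
    split_ifs <;> grind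
  have hoff : ∀ i j : ι, (if i = j then 0 else R) = R - if i = j then R else 0 := by
    intro i j
    split_ifs <;> simp
  simp only [Finset.sum_add_distrib, hpair, ite_and, ne_eq, ite_not, Finset.sum_ite_irrel,
    Finset.sum_ite_eq, Finset.sum_ite_eq', Finset.mem_univ, if_true, Finset.sum_const_zero,
    Finset.sum_const, Finset.card_univ, nsmul_eq_mul, hoff, Finset.sum_sub_distrib]
  ring

structure IsBoundedDegenerateKernel {Z : Type*} [MeasurableSpace Z] (ν : Measure Z)
    (F : Z → Z → ℝ) : Prop where
  measurable : Measurable (Function.uncurry F)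
  bounded : ∃ C, ∀ a b, |F a b| ≤ C
  symm : ∀ a b, F a b = F b a
  integral_eq_zero : ∀ a, ∫ b, F a b ∂ν = 0

namespace IsBoundedDegenerateKernel

variable {Z Ω ι : Type*} [MeasurableSpace Z] [MeasurableSpace Ω] {ν : Measure Z}
  {F : Z → Z → ℝ} {μ : Measure Ω} {w : ι → Ω → Z}

theorem measurable_comp (hF : IsBoundedDegenerateKernel ν F) {u v : Ω → Z}
    (hu : Measurable u) (hv : Measurable v) : Measurable fun ω => F (u ω) (v ω) :=
  hF.measurable.comp (hu.prodMk hv)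

theorem memLp_comp [IsFiniteMeasure μ] (hF : IsBoundedDegenerateKernel ν F) {u v : Ω → Z}
    (hu : Measurable u) (hv : Measurable v) (p : ENNReal) :
    MemLp (fun ω => F (u ω) (v ω)) p μ :=
  let ⟨C, hC⟩ := hF.bounded
  MemLp.of_bound (hF.measurable_comp hu hv).aestronglyMeasurable C (ae_of_all _ fun _ => hC _ _)

theorem integral_mul_apply_eq_zero [IsFiniteMeasure μ] (hF : IsBoundedDegenerateKernel ν F)
    (hw : ∀ i, Measurable (w i)) (hind : iIndepFun w μ) (hlaw : ∀ i, μ.map (w i) = ν)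
    {G : Z × Z → ℝ} (hG : Measurable G) (hGb : ∃ C, ∀ p, |G p| ≤ C) {i j k m : ι}
    (hi : i ≠ m) (hj : j ≠ m) (hk : k ≠ m) :
    ∫ ω, G (w i ω, w j ω) * F (w k ω) (w m ω) ∂μ = 0 := by
  obtain ⟨CG, hCG⟩ := hGb
  obtain ⟨C, hC⟩ := hF.bounded
  refine (hind.indepFun_prodMk_prodMk_of_ne hw hi hj hk).integral_eq_zero_of_integral_snd_eq_zero
    (H := fun q => G q.1.1 * F q.1.2 q.2) (((hw i).prodMk (hw j)).prodMk (hw k)) (hw m) ?_ ?_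
  · refine Integrable.of_bound ?_ (CG * C)
      (ae_of_all _ fun _ => abs_mul_le_of_abs_le (hCG _) (hC _ _))
    exact ((hG.comp measurable_fst.fst).mul
      (hF.measurable.comp (measurable_fst.snd.prodMk measurable_snd))).aestronglyMeasurable
  · intro v
    change ∫ z, G v.1 * F v.2 z ∂(μ.map (w m)) = 0
    rw [hlaw, integral_const_mul, hF.integral_eq_zero, mul_zero]

theorem integral_apply_eq_zero [IsFiniteMeasure μ] (hF : IsBoundedDegenerateKernel ν F)
    (hw : ∀ i, Measurable (w i)) (hind : iIndepFun w μ) (hlaw : ∀ i, μ.map (w i) = ν)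
    {i j : ι} (hij : i ≠ j) : ∫ ω, F (w i ω) (w j ω) ∂μ = 0 := by
  simpa using hF.integral_mul_apply_eq_zero hw hind hlaw (G := fun _ => 1) measurable_const
    ⟨1, fun _ => by simp⟩ hij hij hij

theorem covariance_eq_zero_of_ne [IsProbabilityMeasure μ] (hF : IsBoundedDegenerateKernel ν F)
    (hw : ∀ i, Measurable (w i)) (hind : iIndepFun w μ) (hlaw : ∀ i, μ.map (w i) = ν)
    {i j k m : ι} (hi : i ≠ m) (hj : j ≠ m) (hk : k ≠ m) :
    cov[fun ω => F (w i ω) (w j ω), fun ω => F (w k ω) (w m ω); μ] = 0 := by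
  rw [covariance_eq_sub (hF.memLp_comp (hw i) (hw j) 2) (hF.memLp_comp (hw k) (hw m) 2),
    hF.integral_apply_eq_zero hw hind hlaw hk, mul_zero, sub_zero]
  exact hF.integral_mul_apply_eq_zero hw hind hlaw hF.measurable
    (hF.bounded.imp fun _ hC p => hC p.1 p.2) hi hj hk

theorem covariance_apply_self [IsProbabilityMeasure μ] (hF : IsBoundedDegenerateKernel ν F)
    (hw : ∀ i, Measurable (w i)) (hind : iIndepFun w μ) (hlaw : ∀ i, μ.map (w i) = ν)
    {i j : ι} (hij : i ≠ j) :
    cov[fun ω => F (w i ω) (w j ω), fun ω => F (w i ω) (w j ω); μ] =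
      ∫ p, F p.1 p.2 ^ 2 ∂(ν.prod ν) := by
  have hpair : μ.map (fun ω => (w i ω, w j ω)) = ν.prod ν := by
    rw [(hind.indepFun hij).map_prod_eq_prod_map_map (hw i).aemeasurable (hw j).aemeasurable,
      hlaw, hlaw]
  have hsq : Measurable fun p : Z × Z => F p.1 p.2 ^ 2 := hF.measurable.pow_const 2
  rw [covariance_self (hF.measurable_comp (hw i) (hw j)).aemeasurable,
    variance_of_integral_eq_zero (hF.measurable_comp (hw i) (hw j)).aemeasurable
      (hF.integral_apply_eq_zero hw hind hlaw hij), ← hpair,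
    integral_map ((hw i).prodMk (hw j)).aemeasurable hsq.aestronglyMeasurable]

theorem covariance_apply_diag [IsProbabilityMeasure μ] [DecidableEq ι]
    (hF : IsBoundedDegenerateKernel ν F) (hw : ∀ i, Measurable (w i)) (hind : iIndepFun w μ)
    (hlaw : ∀ i, μ.map (w i) = ν) (i k : ι) :
    cov[fun ω => F (w i ω) (w i ω), fun ω => F (w k ω) (w k ω); μ] =
      if i = k then Var[fun z => F z z; ν] else 0 := by
  have hdiag : Measurable fun z => F z z := hF.measurable_comp measurable_id measurable_id
  split_ifs with hik
  · subst hik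
    rw [covariance_self (hF.measurable_comp (hw i) (hw i)).aemeasurable, ← hlaw i,
      variance_map hdiag.aemeasurable (hw i).aemeasurable]
    rfl
  · exact ((hind.indepFun hik).comp hdiag hdiag).covariance_eq_zero
      (hF.memLp_comp (hw i) (hw i) 2) (hF.memLp_comp (hw k) (hw k) 2)

theorem covariance_apply_apply [IsProbabilityMeasure μ] [DecidableEq ι]
    (hF : IsBoundedDegenerateKernel ν F) (hw : ∀ i, Measurable (w i)) (hind : iIndepFun w μ)
    (hlaw : ∀ i, μ.map (w i) = ν) (i j k l : ι) :
    cov[fun ω => F (w i ω) (w j ω), fun ω => F (w k ω) (w l ω); μ] =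
      (if i = j ∧ j = k ∧ k = l then Var[fun z => F z z; ν] else 0) +
        if i ≠ j ∧ (k = i ∧ l = j ∨ k = j ∧ l = i) then ∫ p, F p.1 p.2 ^ 2 ∂(ν.prod ν) else 0 := by
  have hswap : ∀ a b, (fun ω => F (w a ω) (w b ω)) = fun ω => F (w b ω) (w a ω) :=
    fun a b => funext fun ω => hF.symm _ _
  have hzero {a b c m : ι} (ha : a ≠ m) (hb : b ≠ m) (hc : c ≠ m) :=
    hF.covariance_eq_zero_of_ne hw hind hlaw ha hb hc
  -- either some index occurs exactly once, or the indices pair up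
  obtain ⟨hi, hj, hk⟩ | ⟨hi, hj, hl⟩ | ⟨hk, hl, hi⟩ | ⟨hk, hl, hj⟩ | ⟨rfl, rfl⟩ |
      ⟨hij, rfl, rfl⟩ | ⟨hij, rfl, rfl⟩ :
      (i ≠ l ∧ j ≠ l ∧ k ≠ l) ∨ (i ≠ k ∧ j ≠ k ∧ l ≠ k) ∨ (k ≠ j ∧ l ≠ j ∧ i ≠ j) ∨
      (k ≠ i ∧ l ≠ i ∧ j ≠ i) ∨ (i = j ∧ k = l) ∨ (i ≠ j ∧ k = i ∧ l = j) ∨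
      (i ≠ j ∧ k = j ∧ l = i) := by grind
  · rw [hzero hi hj hk]; grind
  · rw [hswap k, hzero hi hj hl]; grind
  · rw [covariance_comm, hzero hk hl hi]; grind
  · rw [covariance_comm, hswap i, hzero hk hl hj]; grind
  · rw [hF.covariance_apply_diag hw hind hlaw]; grind
  · rw [hF.covariance_apply_self hw hind hlaw hij]; grind
  · rw [hswap k, hF.covariance_apply_self hw hind hlaw hij]; grind

theorem variance_vStatistic [IsProbabilityMeasure μ] [Fintype ι] [Nonempty ι]
    (hF : IsBoundedDegenerateKernel ν F) (hw : ∀ i, Measurable (w i)) (hind : iIndepFun w μ)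
    (hlaw : ∀ i, μ.map (w i) = ν) :
    Var[fun ω => (Fintype.card ι : ℝ)⁻¹ * ∑ i, ∑ j, F (w i ω) (w j ω); μ] =
      (Fintype.card ι : ℝ)⁻¹ * Var[fun z => F z z; ν] +
        2 * (1 - (Fintype.card ι : ℝ)⁻¹) * ∫ p, F p.1 p.2 ^ 2 ∂(ν.prod ν) := by
  classical
  have hmemLp : ∀ i j, MemLp (fun ω => F (w i ω) (w j ω)) 2 μ :=
    fun i j => hF.memLp_comp (hw i) (hw j) 2
  have hrow : ∀ i, MemLp (fun ω => ∑ j, F (w i ω) (w j ω)) 2 μ :=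
    fun i => memLp_finsetSum _ fun j _ => hmemLp i j
  have hsum : MemLp (fun ω => ∑ i, ∑ j, F (w i ω) (w j ω)) 2 μ :=
    memLp_finsetSum _ fun i _ => hrow i
  rw [variance_const_mul, ← covariance_self hsum.aestronglyMeasurable.aemeasurable,
    covariance_fun_sum_fun_sum hrow hrow, Finset.sum_congr rfl fun i _ =>
      Finset.sum_congr rfl fun k _ => covariance_fun_sum_fun_sum (hmemLp i) (hmemLp k)]
  simp_rw [hF.covariance_apply_apply hw hind hlaw]
  rw [Finset.sum_congr rfl fun i _ => Finset.sum_comm, sum_ite_diag_add_ite_offDiag_pair]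
  field_simp

theorem mul_prod {X Y : Type*} [MeasurableSpace X] [MeasurableSpace Y] {Px : Measure X}
    {Py : Measure Y} [SFinite Px] [SFinite Py] {K : X → X → ℝ} {L : Y → Y → ℝ}
    (hK : IsBoundedDegenerateKernel Px K) (hL : IsBoundedDegenerateKernel Py L) :
    IsBoundedDegenerateKernel (Px.prod Py) fun a b => K a.1 b.1 * L a.2 b.2 where
  measurable :=
    (hK.measurable.comp (measurable_fst.fst.prodMk measurable_snd.fst)).mul
      (hL.measurable.comp (measurable_fst.snd.prodMk measurable_snd.snd))
  bounded :=
    let ⟨CK, hCK⟩ := hK.bounded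
    let ⟨CL, hCL⟩ := hL.bounded
    ⟨CK * CL, fun _ _ => abs_mul_le_of_abs_le (hCK _ _) (hCL _ _)⟩
  symm a b := by rw [hK.symm, hL.symm]
  integral_eq_zero a := by
    rw [integral_prod_mul (fun x => K a.1 x) (fun y => L a.2 y), hK.integral_eq_zero, zero_mul]

end IsBoundedDegenerateKernel

theorem integral_mul_prod_prod {X Y : Type*} [MeasurableSpace X] [MeasurableSpace Y]
    {Px : Measure X} {Py : Measure Y} [IsFiniteMeasure Px] [IsFiniteMeasure Py]
    {f : X → X → ℝ} {g : Y → Y → ℝ} (hf : Measurable (Function.uncurry f))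
    (hg : Measurable (Function.uncurry g)) (hfb : ∃ C, ∀ x x', |f x x'| ≤ C)
    (hgb : ∃ C, ∀ y y', |g y y'| ≤ C) :
    ∫ p, f p.1.1 p.2.1 * g p.1.2 p.2.2 ∂((Px.prod Py).prod (Px.prod Py)) =
      (∫ q, f q.1 q.2 ∂(Px.prod Px)) * ∫ q, g q.1 q.2 ∂(Py.prod Py) := by
  obtain ⟨Cf, hCf⟩ := hfb
  obtain ⟨Cg, hCg⟩ := hgb
  have hfint : Integrable (Function.uncurry f) (Px.prod Px) :=
    Integrable.of_bound hf.aestronglyMeasurable Cf (ae_of_all _ fun q => hCf q.1 q.2)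
  have hgint : Integrable (Function.uncurry g) (Py.prod Py) :=
    Integrable.of_bound hg.aestronglyMeasurable Cg (ae_of_all _ fun q => hCg q.1 q.2)
  have hfgint : Integrable (fun p : (X × Y) × (X × Y) => f p.1.1 p.2.1 * g p.1.2 p.2.2)
      ((Px.prod Py).prod (Px.prod Py)) :=
    Integrable.of_bound ((hf.comp (measurable_fst.fst.prodMk measurable_snd.fst)).mul
      (hg.comp (measurable_fst.snd.prodMk measurable_snd.snd))).aestronglyMeasurable (Cf * Cg)
      (ae_of_all _ fun _ => abs_mul_le_of_abs_le (hCf _ _) (hCg _ _))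
  calc _ = ∫ a : X × Y, (∫ x, f a.1 x ∂Px) * ∫ y, g a.2 y ∂Py ∂(Px.prod Py) := by
        rw [integral_prod _ hfgint]
        exact integral_congr_ae (ae_of_all _ fun a => integral_prod_mul (f a.1) (g a.2))
    _ = (∫ x, ∫ x', f x x' ∂Px ∂Px) * ∫ y, ∫ y', g y y' ∂Py ∂Py :=
        integral_prod_mul (fun x => ∫ x', f x x' ∂Px) (fun y => ∫ y', g y y' ∂Py)
    _ = _ := congr_arg₂ (· * ·) (integral_prod _ hfint).symm (integral_prod _ hgint).symm

/-- Under the independence null, Var(T̃_n) = n⁻¹Var(K̃(x,x)L̃(y,y)) + 2(1-n⁻¹)M₂N₂. -/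
theorem tilde_Tn_variance
    {X Y : Type*} [MeasurableSpace X] [MeasurableSpace Y]
    (Px : Measure X) (Py : Measure Y)
    [IsProbabilityMeasure Px] [IsProbabilityMeasure Py]
    {Ω : Type*} [MeasurableSpace Ω] (μ : Measure Ω) [IsProbabilityMeasure μ]
    (Ktil : X → X → ℝ) (Ltil : Y → Y → ℝ)
    (hKmeas : Measurable (Function.uncurry Ktil))
    (hLmeas : Measurable (Function.uncurry Ltil))
    (hKsymm : ∀ x x', Ktil x x' = Ktil x' x) (hLsymm : ∀ y y', Ltil y y' = Ltil y' y)
    (BK BL : ℝ) (hKbdd : ∀ x x', |Ktil x x'| ≤ BK) (hLbdd : ∀ y y', |Ltil y y'| ≤ BL)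
    (hKcent : ∀ x', (∫ x, Ktil x x' ∂Px) = 0)
    (hLcent : ∀ y', (∫ y, Ltil y y' ∂Py) = 0)
    (n : ℕ) (hn : 1 ≤ n)
    (w : Fin n → Ω → X × Y) (hwmeas : ∀ i, Measurable (w i))
    (hwiid : iIndepFun w μ)
    (hwlaw : ∀ i, μ.map (w i) = Px.prod Py)
    (Tn : Ω → ℝ)
    (hTn : ∀ ω, Tn ω = (n : ℝ)⁻¹ *
      ∑ i : Fin n, ∑ j : Fin n, Ktil (w i ω).1 (w j ω).1 * Ltil (w i ω).2 (w j ω).2) :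
    variance Tn μ =
      (n : ℝ)⁻¹ * variance (fun p : X × Y => Ktil p.1 p.1 * Ltil p.2 p.2) (Px.prod Py)
        + 2 * (1 - (n : ℝ)⁻¹) *
            ((∫ q : X × X, (Ktil q.1 q.2) ^ 2 ∂(Px.prod Px)) *
              ∫ q : Y × Y, (Ltil q.1 q.2) ^ 2 ∂(Py.prod Py)) := by
  have hK : IsBoundedDegenerateKernel Px Ktil := ⟨hKmeas, ⟨BK, hKbdd⟩, hKsymm,
    fun x => (integral_congr_ae (ae_of_all _ (hKsymm x))).trans (hKcent x)⟩
  have hL : IsBoundedDegenerateKernel Py Ltil := ⟨hLmeas, ⟨BL, hLbdd⟩, hLsymm,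
    fun y => (integral_congr_ae (ae_of_all _ (hLsymm y))).trans (hLcent y)⟩
  have : Nonempty (Fin n) := ⟨⟨0, hn⟩⟩
  have hvar := (hK.mul_prod hL).variance_vStatistic hwmeas hwiid hwlaw
  simp only [Fintype.card_fin, mul_pow] at hvar
  rw [funext hTn, hvar, integral_mul_prod_prod (f := fun x x' => Ktil x x' ^ 2)
    (g := fun y y' => Ltil y y' ^ 2) (hKmeas.pow_const 2) (hLmeas.pow_const 2)
    ⟨BK ^ 2, fun x x' => abs_pow (Ktil x x') 2 ▸ pow_le_pow_left₀ (abs_nonneg _) (hKbdd x x') 2⟩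
    ⟨BL ^ 2, fun y y' => abs_pow (Ltil y y') 2 ▸ pow_le_pow_left₀ (abs_nonneg _) (hLbdd y y') 2⟩]
end

section
/- Let B_{ij} = K̃(x_i,x_j)L̃(y_i,y_j) for 1 ≤ i < j ≤ n with i.i.d. (x_i,y_i) following the product law P_x ⊗ P_y, where K̃, L̃ are bounded centered kernels. Then E[(∑_{i<j} B_{ij})³] = (n(n-1)/2)·E[B₁₂³] + n(n-1)(n-2)·E[B₁₂B₂₃B₃₁], where E[B₁₂B₂₃B₃₁] = M₃N₃ with M₃ = E[K̃(x,x')K̃(x',x'')K̃(x'',x)] and N₃ = E[L̃(y,y')L̃(y',y'')L̃(y'',y)] for i.i.d. triples. -/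
/-!
Expanding the cube gives a sum of `E[B_p B_q B_r]` over triples of edges `p, q, r` of the
complete graph on the `n` sample indices. If some vertex lies on exactly one of the three edges,
the term vanishes: that sample is independent of all the others, and integrating the centred
kernel over it first (Fubini) gives zero. The remaining triples are the diagonal ones
`p = q = r`, each contributing `E[B₁₂³]`, and the triangles `{i,j}, {j,k}, {k,i}`, which
correspond bijectively to the `n(n-1)(n-2)` ordered triples of distinct indices and each
contribute `E[B₁₂B₂₃B₃₁]`. For the product kernel this expectation is `M₃N₃`, because under
`(Px ⊗ Py)³` the triple of `x`-coordinates is independent of the triple of `y`-coordinates.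
-/

open MeasureTheory ProbabilityTheory Finset Function

def MeasurableEquiv.prodProdProdComm (α β γ δ : Type*) [MeasurableSpace α] [MeasurableSpace β]
    [MeasurableSpace γ] [MeasurableSpace δ] : (α × β) × γ × δ ≃ᵐ (α × γ) × β × δ where
  toEquiv := Equiv.prodProdProdComm α β γ δ
  measurable_toFun := by dsimp [Equiv.prodProdProdComm]; fun_prop
  measurable_invFun := by dsimp [Equiv.prodProdProdComm]; fun_prop

section ProductMeasure

variable {α β γ δ : Type*} [MeasurableSpace α] [MeasurableSpace β] [MeasurableSpace γ]
  [MeasurableSpace δ]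

theorem MeasureTheory.measurePreserving_prodProdProdComm (μa : Measure α) (μb : Measure β)
    (μc : Measure γ) (μd : Measure δ) [SFinite μa] [SFinite μb] [SFinite μc] [SFinite μd] :
    MeasurePreserving (MeasurableEquiv.prodProdProdComm α β γ δ)
      ((μa.prod μb).prod (μc.prod μd)) ((μa.prod μc).prod (μb.prod μd)) :=
  (measurePreserving_prodAssoc μa μc (μb.prod μd)).symm.comp <|
    ((MeasurePreserving.id μa).prod (measurePreserving_prodAssoc μc μb μd)).comp <|
    ((MeasurePreserving.id μa).prod
      (Measure.measurePreserving_swap.prod (MeasurePreserving.id μd))).comp <|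
    ((MeasurePreserving.id μa).prod (measurePreserving_prodAssoc μb μc μd).symm).comp <|
    measurePreserving_prodAssoc μa μb (μc.prod μd)

theorem MeasureTheory.integral_prod_prod_prod_mul (μ : Measure α) (ν : Measure β) [SFinite μ]
    [SFinite ν] (f : α × α × α → ℝ) (g : β × β × β → ℝ) :
    ∫ q, f (q.1.1, q.2.1.1, q.2.2.1) * g (q.1.2, q.2.1.2, q.2.2.2)
        ∂((μ.prod ν).prod ((μ.prod ν).prod (μ.prod ν))) =
      (∫ x, f x ∂(μ.prod (μ.prod μ))) * ∫ y, g y ∂(ν.prod (ν.prod ν)) := by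
  let e := ((MeasurableEquiv.refl (α × β)).prodCongr (.prodProdProdComm α β α β)).trans
    (.prodProdProdComm α β (α × α) (β × β))
  have he : MeasurePreserving e _ _ :=
    (measurePreserving_prodProdProdComm μ ν (μ.prod μ) (ν.prod ν)).comp
      ((MeasurePreserving.id (μ.prod ν)).prod (measurePreserving_prodProdProdComm μ ν μ ν))
  rw [← integral_prod_mul, ← he.integral_comp']
  rfl

theorem Measurable.apply₂ {k : β → β → γ} (hk : Measurable (uncurry k)) {f g : α → β}
    (hf : Measurable f) (hg : Measurable g) : Measurable fun x => k (f x) (g x) :=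
  hk.comp (hf.prodMk hg)

end ProductMeasure

section Independence

variable {Ω α β E : Type*} [MeasurableSpace Ω] [MeasurableSpace α] [MeasurableSpace β]
  [NormedAddCommGroup E] [NormedSpace ℝ E] {μ : Measure Ω} [IsFiniteMeasure μ]

theorem ProbabilityTheory.IndepFun.integral_comp_eq_zero {X : Ω → α} {T : Ω → β}
    (hX : Measurable X) (hT : Measurable T) (hXT : IndepFun X T μ) {f : α × β → E}
    (hf : Integrable f ((μ.map X).prod (μ.map T)))
    (hf₀ : ∀ t, ∫ a, f (a, t) ∂(μ.map X) = 0) :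
    ∫ ω, f (X ω, T ω) ∂μ = 0 := by
  have hmap := (indepFun_iff_map_prod_eq_prod_map_map hX.aemeasurable hT.aemeasurable).mp hXT
  rw [← integral_map (hX.prodMk hT).aemeasurable (hmap ▸ hf.aestronglyMeasurable), hmap,
    integral_prod_symm f hf]
  simp [hf₀]

end Independence

theorem MeasureTheory.Integrable.mul_mul_of_abs_le {α : Type*} [MeasurableSpace α]
    {ν : Measure α} [IsFiniteMeasure ν] {f g h : α → ℝ} {C : ℝ} (hf : AEStronglyMeasurable f ν)
    (hg : AEStronglyMeasurable g ν) (hh : AEStronglyMeasurable h ν) (hfC : ∀ x, |f x| ≤ C)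
    (hgC : ∀ x, |g x| ≤ C) (hhC : ∀ x, |h x| ≤ C) :
    Integrable (fun x => f x * g x * h x) ν := by
  refine .of_bound ((hf.mul hg).mul hh) (C * C * C) (ae_of_all _ fun x => ?_)
  have hC : 0 ≤ C := (abs_nonneg _).trans (hfC x)
  rw [Real.norm_eq_abs, abs_mul, abs_mul]
  exact mul_le_mul (mul_le_mul (hfC x) (hgC x) (abs_nonneg _) hC) (hhC x) (abs_nonneg _)
    (mul_nonneg hC hC)

theorem Finset.sum_pow_three {ι R : Type*} [CommSemiring R] (s : Finset ι) (f : ι → R) :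
    (∑ i ∈ s, f i) ^ 3 = ∑ t ∈ s ×ˢ s ×ˢ s, f t.1 * f t.2.1 * f t.2.2 := by
  simp_rw [pow_three, sum_product, sum_mul_sum, mul_sum, mul_assoc]

namespace UStatistic

section Combinatorics

variable {ι : Type*}

def Incident (v : ι) (p : ι × ι) : Prop := v = p.1 ∨ v = p.2

def IsLeaf (v : ι) (p q r : ι × ι) : Prop := Incident v p ∧ ¬Incident v q ∧ ¬Incident v r

variable [LinearOrder ι]

def edge (i j : ι) : ι × ι := (min i j, max i j)

theorem edge_eq_edge_iff {a b c d : ι} :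
    edge a b = edge c d ↔ a = c ∧ b = d ∨ a = d ∧ b = c := by
  simp only [edge, Prod.ext_iff]
  grind

theorem edge_fst_lt_snd {i j : ι} (h : i ≠ j) : (edge i j).1 < (edge i j).2 := by
  grind [edge]

theorem apply_edge {β : Type*} {f : ι → ι → β} (hf : ∀ i j, f i j = f j i) (i j : ι) :
    f (edge i j).1 (edge i j).2 = f i j := by
  rcases le_total i j with h | h
  · simp [edge, h]
  · simp [edge, h, hf j i]

theorem eq_or_exists_cycle_of_forall_not_isLeaf {p q r : ι × ι} (hp : p.1 < p.2)
    (hq : q.1 < q.2) (hr : r.1 < r.2)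
    (h : ∀ v, ¬(IsLeaf v p q r ∨ IsLeaf v q r p ∨ IsLeaf v r p q)) :
    (q = p ∧ r = p) ∨
      ∃ i j k, i ≠ j ∧ j ≠ k ∧ i ≠ k ∧ p = edge i j ∧ q = edge j k ∧ r = edge k i := by
  obtain ⟨a, b⟩ := p
  obtain ⟨c, d⟩ := q
  obtain ⟨e, f⟩ := r
  have ha := h a
  have hb := h b
  have hc := h c
  have hd := h d
  have he := h e
  have hf := h f
  simp only [IsLeaf, Incident, edge, Prod.ext_iff] at *
  clear h
  by_cases hpq : a = c ∧ b = d
  · grind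
  by_cases hpr : a = e ∧ b = f
  · grind
  have hshare : (a = c ∨ a = d) ∨ (b = c ∨ b = d) := by grind
  right
  rcases hshare with (rfl | rfl) | (rfl | rfl)
  · exact ⟨b, a, d, by grind⟩
  · exact ⟨b, a, c, by grind⟩
  · exact ⟨a, b, d, by grind⟩
  · exact ⟨a, b, c, by grind⟩

variable [Fintype ι]

variable (ι) in
def ltPairs : Finset (ι × ι) := {q | q.1 < q.2}

variable (ι) in
def distinctTriples : Finset (ι × ι × ι) := {t | t.1 ≠ t.2.1 ∧ t.2.1 ≠ t.2.2 ∧ t.1 ≠ t.2.2}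

def cycleEdges (t : ι × ι × ι) : (ι × ι) × (ι × ι) × (ι × ι) :=
  (edge t.1 t.2.1, edge t.2.1 t.2.2, edge t.2.2 t.1)

@[simp] theorem mem_ltPairs {q : ι × ι} : q ∈ ltPairs ι ↔ q.1 < q.2 := by simp [ltPairs]

@[simp] theorem mem_distinctTriples {t : ι × ι × ι} :
    t ∈ distinctTriples ι ↔ t.1 ≠ t.2.1 ∧ t.2.1 ≠ t.2.2 ∧ t.1 ≠ t.2.2 := by
  simp [distinctTriples]

theorem injOn_cycleEdges : Set.InjOn cycleEdges (distinctTriples ι : Set (ι × ι × ι)) := by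
  rintro ⟨i, j, k⟩ hijk ⟨i', j', k'⟩ hijk' h
  simp only [mem_coe, mem_distinctTriples] at hijk hijk'
  simp only [cycleEdges, Prod.mk.injEq, edge_eq_edge_iff] at h
  grind

theorem sum_ltPairs_triples_eq {M : Type*} [AddCommMonoid M] (F : (ι × ι) × (ι × ι) × (ι × ι) → M)
    (hF : ∀ p ∈ ltPairs ι, ∀ q ∈ ltPairs ι, ∀ r ∈ ltPairs ι, ∀ v,
      IsLeaf v p q r ∨ IsLeaf v q r p ∨ IsLeaf v r p q → F (p, q, r) = 0) :
    ∑ t ∈ ltPairs ι ×ˢ ltPairs ι ×ˢ ltPairs ι, F t =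
      ∑ p ∈ ltPairs ι, F (p, p, p) + ∑ t ∈ distinctTriples ι, F (cycleEdges t) := by
  classical
  have hdiag : Set.InjOn (fun p : ι × ι => (p, p, p)) (ltPairs ι) :=
    fun p _ p' _ h => congrArg Prod.fst h
  have hdisj : Disjoint ((ltPairs ι).image fun p => (p, p, p))
      ((distinctTriples ι).image cycleEdges) := by
    simp only [disjoint_left, mem_image, mem_distinctTriples]
    rintro _ ⟨p, -, rfl⟩ ⟨⟨i, j, k⟩, hijk, h⟩
    simp only [cycleEdges, Prod.mk.injEq] at h
    have := edge_eq_edge_iff.mp (h.1.trans h.2.1.symm)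
    grind
  rw [← sum_image hdiag, ← sum_image injOn_cycleEdges, ← sum_union hdisj]
  refine (sum_subset ?_ ?_).symm
  · simp only [subset_iff, mem_union, mem_image, mem_product, mem_ltPairs, mem_distinctTriples]
    rintro _ (⟨p, hp, rfl⟩ | ⟨⟨i, j, k⟩, ⟨hij, hjk, hik⟩, rfl⟩)
    · exact ⟨hp, hp, hp⟩
    · exact ⟨edge_fst_lt_snd hij, edge_fst_lt_snd hjk, edge_fst_lt_snd (Ne.symm hik)⟩
  · rintro ⟨p, q, r⟩ ht hnot
    obtain ⟨hp, hq, hr⟩ : p ∈ ltPairs ι ∧ q ∈ ltPairs ι ∧ r ∈ ltPairs ι := by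
      simpa only [mem_product] using ht
    by_contra hF0
    have hno_leaf := fun v hv => hF0 (hF p hp q hq r hr v hv)
    rcases eq_or_exists_cycle_of_forall_not_isLeaf (mem_ltPairs.mp hp) (mem_ltPairs.mp hq)
        (mem_ltPairs.mp hr) hno_leaf with ⟨rfl, rfl⟩ | ⟨i, j, k, hij, hjk, hik, rfl, rfl, rfl⟩
    · exact hnot (mem_union_left _ (mem_image_of_mem _ hp))
    · refine hnot (mem_union_right _ (mem_image.mpr ⟨(i, j, k), ?_, rfl⟩))
      simp [hij, hjk, hik]

theorem card_ltPairs : #(ltPairs ι) = (Fintype.card ι).choose 2 := by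
  simpa [ltPairs] using card_product_filter_lt (s := (univ : Finset ι))

theorem card_distinctTriples :
    #(distinctTriples ι) = Fintype.card ι * (Fintype.card ι - 1) * (Fintype.card ι - 2) := by
  classical
  have hfiber (i j : ι) :
      #{k : ι | i ≠ j ∧ j ≠ k ∧ i ≠ k} = if i = j then 0 else Fintype.card ι - 2 := by
    split_ifs with hij
    · simp [hij]
    rw [← card_pair hij, ← card_univ, ← card_sdiff_of_subset (subset_univ _)]
    congr 1
    ext k
    simp [hij]
    tauto
  rw [distinctTriples, card_filter, Fintype.sum_prod_type]
  simp_rw [Fintype.sum_prod_type, ← card_filter, hfiber]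
  simp only [sum_ite, sum_const_zero, zero_add, sum_const, smul_eq_mul, filter_ne, card_univ,
    card_erase_of_mem (mem_univ _), mul_assoc]

theorem cast_card_distinctTriples {R : Type*} [CommRing R] :
    (#(distinctTriples ι) : R) = Fintype.card ι * (Fintype.card ι - 1) * (Fintype.card ι - 2) := by
  rw [card_distinctTriples]
  rcases Fintype.card ι with _ | _ | n
  · simp
  · simp
  · push_cast [Nat.add_sub_cancel, Nat.add_succ_sub_one]
    ring

end Combinatorics

section Moments

variable {Z Ω ι : Type*} [MeasurableSpace Z] [MeasurableSpace Ω] {P : Measure Z}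
  {μ : Measure Ω} [IsFiniteMeasure μ] {w : ι → Ω → Z}
  (hw : ∀ i, Measurable (w i)) (hind : iIndepFun w μ) (hlaw : ∀ i, μ.map (w i) = P)
include hw hind hlaw

theorem map_pair_eq_prod {i j : ι} (hij : i ≠ j) :
    μ.map (fun ω => (w i ω, w j ω)) = P.prod P := by
  rw [(indepFun_iff_map_prod_eq_prod_map_map (hw i).aemeasurable (hw j).aemeasurable).mp
    (hind.indepFun hij), hlaw, hlaw]

theorem map_triple_eq_prod {i j l : ι} (hij : i ≠ j) (hjl : j ≠ l) (hil : i ≠ l) :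
    μ.map (fun ω => (w i ω, w j ω, w l ω)) = P.prod (P.prod P) := by
  have h : IndepFun (w i) (fun ω => (w j ω, w l ω)) μ :=
    (hind.indepFun_prodMk hw j l i hij.symm hil.symm).symm
  rw [(indepFun_iff_map_prod_eq_prod_map_map (hw i).aemeasurable
      ((hw j).prodMk (hw l)).aemeasurable).mp h, hlaw, map_pair_eq_prod hw hind hlaw hjl]

variable {k : Z → Z → ℝ} (hk : Measurable (uncurry k))
include hk

theorem integral_pow_three_of_ne {i j : ι} (hij : i ≠ j) :
    ∫ ω, k (w i ω) (w j ω) ^ 3 ∂μ = ∫ z, k z.1 z.2 ^ 3 ∂(P.prod P) := by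
  have hcube : Measurable fun z : Z × Z => k z.1 z.2 ^ 3 :=
    (hk.apply₂ measurable_fst measurable_snd).pow_const 3
  rw [← map_pair_eq_prod hw hind hlaw hij, integral_map ((hw i).prodMk (hw j)).aemeasurable
    hcube.aestronglyMeasurable]

theorem integral_cycle_of_ne {i j l : ι} (hij : i ≠ j) (hjl : j ≠ l) (hil : i ≠ l) :
    ∫ ω, k (w i ω) (w j ω) * k (w j ω) (w l ω) * k (w l ω) (w i ω) ∂μ =
      ∫ z, k z.1 z.2.1 * k z.2.1 z.2.2 * k z.2.2 z.1 ∂(P.prod (P.prod P)) := by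
  have hcycle : Measurable fun z : Z × Z × Z => k z.1 z.2.1 * k z.2.1 z.2.2 * k z.2.2 z.1 := by
    refine ((hk.apply₂ ?_ ?_).mul (hk.apply₂ ?_ ?_)).mul (hk.apply₂ ?_ ?_) <;> fun_prop
  rw [← map_triple_eq_prod hw hind hlaw hij hjl hil, integral_map
    ((hw i).prodMk ((hw j).prodMk (hw l))).aemeasurable hcycle.aestronglyMeasurable]

variable {C : ℝ} (hbdd : ∀ z z', |k z z'| ≤ C) (hcent : ∀ z', ∫ z, k z z' ∂P = 0)
include hbdd hcent

theorem integral_mul_mul_eq_zero_of_ne {v u a b c d : ι} (hu : v ≠ u) (ha : v ≠ a) (hb : v ≠ b)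
    (hc : v ≠ c) (hd : v ≠ d) :
    ∫ ω, k (w v ω) (w u ω) * k (w a ω) (w b ω) * k (w c ω) (w d ω) ∂μ = 0 := by
  classical
  let s : Finset ι := {u, a, b, c, d}
  have hs : Disjoint {v} s := by simp [s, hu, ha, hb, hc, hd]
  let T : Ω → s → Z := fun ω i => w i ω
  have hT : Measurable T := measurable_pi_lambda _ fun i => hw i
  have hvT : IndepFun (w v) T μ :=
    (hind.indepFun_finset {v} s hs hw).comp
      (measurable_pi_apply (⟨v, mem_singleton_self v⟩ : ({v} : Finset ι))) measurable_id
  let ev (i : ι) (hi : i ∈ s) : Z × (s → Z) → Z := fun p => p.2 ⟨i, hi⟩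
  have hev (i : ι) (hi : i ∈ s) : Measurable (ev i hi) :=
    (measurable_pi_apply _).comp measurable_snd
  let f : Z × (s → Z) → ℝ := fun p =>
    k p.1 (ev u (by simp [s]) p) * k (ev a (by simp [s]) p) (ev b (by simp [s]) p) *
      k (ev c (by simp [s]) p) (ev d (by simp [s]) p)
  refine hvT.integral_comp_eq_zero (f := f) (hw v) hT ?_ fun t => ?_
  · exact Integrable.mul_mul_of_abs_le
      (hk.apply₂ measurable_fst (hev _ _)).aestronglyMeasurable
      (hk.apply₂ (hev _ _) (hev _ _)).aestronglyMeasurable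
      (hk.apply₂ (hev _ _) (hev _ _)).aestronglyMeasurable
      (fun _ => hbdd _ _) (fun _ => hbdd _ _) (fun _ => hbdd _ _)
  · simp only [f, ev, hlaw, integral_mul_const, hcent, zero_mul]

variable (hsymm : ∀ z z', k z z' = k z' z)
include hsymm

theorem integral_mul_mul_eq_zero_of_isLeaf {p q r : ι × ι} {v : ι} (hp : p.1 ≠ p.2)
    (hv : IsLeaf v p q r) :
    ∫ ω, k (w p.1 ω) (w p.2 ω) * k (w q.1 ω) (w q.2 ω) * k (w r.1 ω) (w r.2 ω) ∂μ = 0 := by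
  obtain ⟨hvp, hvq, hvr⟩ := hv
  simp only [Incident, not_or] at hvq hvr
  rcases hvp with rfl | rfl
  · exact integral_mul_mul_eq_zero_of_ne hw hind hlaw hk hbdd hcent hp hvq.1 hvq.2 hvr.1 hvr.2
  · simp_rw [hsymm (w p.1 _) (w p.2 _)]
    exact integral_mul_mul_eq_zero_of_ne hw hind hlaw hk hbdd hcent hp.symm hvq.1 hvq.2 hvr.1
      hvr.2

theorem integral_sum_ltPairs_pow_three [Fintype ι] [LinearOrder ι] :
    ∫ ω, (∑ q ∈ ltPairs ι, k (w q.1 ω) (w q.2 ω)) ^ 3 ∂μ =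
      (Fintype.card ι * (Fintype.card ι - 1) / 2 : ℝ) * ∫ z, k z.1 z.2 ^ 3 ∂(P.prod P) +
        (Fintype.card ι * (Fintype.card ι - 1) * (Fintype.card ι - 2) : ℝ) *
          ∫ z, k z.1 z.2.1 * k z.2.1 z.2.2 * k z.2.2 z.1 ∂(P.prod (P.prod P)) := by
  let B (p : ι × ι) (ω : Ω) : ℝ := k (w p.1 ω) (w p.2 ω)
  let F (t : (ι × ι) × (ι × ι) × (ι × ι)) : ℝ := ∫ ω, B t.1 ω * B t.2.1 ω * B t.2.2 ω ∂μ
  have hB (p : ι × ι) : Measurable (B p) := hk.apply₂ (hw p.1) (hw p.2)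
  have hint (t : (ι × ι) × (ι × ι) × (ι × ι)) :
      Integrable (fun ω => B t.1 ω * B t.2.1 ω * B t.2.2 ω) μ :=
    Integrable.mul_mul_of_abs_le (hB _).aestronglyMeasurable (hB _).aestronglyMeasurable
      (hB _).aestronglyMeasurable (fun _ => hbdd _ _) (fun _ => hbdd _ _) (fun _ => hbdd _ _)
  have hleaf {p q r : ι × ι} {v : ι} (hp : p ∈ ltPairs ι) (hv : IsLeaf v p q r) :
      F (p, q, r) = 0 :=
    integral_mul_mul_eq_zero_of_isLeaf hw hind hlaw hk hbdd hcent hsymm (mem_ltPairs.mp hp).ne hv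
  have hF : ∀ p ∈ ltPairs ι, ∀ q ∈ ltPairs ι, ∀ r ∈ ltPairs ι, ∀ v,
      IsLeaf v p q r ∨ IsLeaf v q r p ∨ IsLeaf v r p q → F (p, q, r) = 0 := by
    rintro p hp q hq r hr v (hv | hv | hv)
    · exact hleaf hp hv
    · exact (integral_congr_ae (ae_of_all _ fun ω => mul_rotate _ _ _)).trans (hleaf hq hv)
    · exact (integral_congr_ae (ae_of_all _ fun ω => (mul_rotate _ _ _).symm)).trans
        (hleaf hr hv)
  have hdiag : ∀ p ∈ ltPairs ι, F (p, p, p) = ∫ z, k z.1 z.2 ^ 3 ∂(P.prod P) := by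
    intro p hp
    simp only [F, ← pow_three']
    exact integral_pow_three_of_ne hw hind hlaw hk (mem_ltPairs.mp hp).ne
  have hcycle : ∀ t ∈ distinctTriples ι, F (cycleEdges t) =
      ∫ z, k z.1 z.2.1 * k z.2.1 z.2.2 * k z.2.2 z.1 ∂(P.prod (P.prod P)) := by
    rintro ⟨i, j, l⟩ ht
    obtain ⟨hij, hjl, hil⟩ := mem_distinctTriples.mp ht
    have hedge (a b : ι) (ω : Ω) : B (edge a b) ω = B (a, b) ω :=
      apply_edge (f := fun a b => k (w a ω) (w b ω)) (fun _ _ => hsymm _ _) a b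
    simp only [F, cycleEdges, hedge]
    exact integral_cycle_of_ne hw hind hlaw hk hij hjl hil
  calc ∫ ω, (∑ q ∈ ltPairs ι, B q ω) ^ 3 ∂μ
      = ∑ t ∈ ltPairs ι ×ˢ ltPairs ι ×ˢ ltPairs ι, F t := by
        simp_rw [sum_pow_three]
        exact integral_finsetSum _ fun t _ => hint t
    _ = ∑ p ∈ ltPairs ι, F (p, p, p) + ∑ t ∈ distinctTriples ι, F (cycleEdges t) :=
        sum_ltPairs_triples_eq F hF
    _ = _ := by
        rw [sum_congr rfl hdiag, sum_congr rfl hcycle, sum_const, sum_const, nsmul_eq_mul,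
          nsmul_eq_mul, card_ltPairs, Nat.cast_choose_two, cast_card_distinctTriples]

end Moments

section ProductKernel

variable {X Y : Type*} {K : X → X → ℝ} {L : Y → Y → ℝ}

def prodKernel (K : X → X → ℝ) (L : Y → Y → ℝ) (a b : X × Y) : ℝ := K a.1 b.1 * L a.2 b.2

theorem prodKernel_comm (hK : ∀ x x', K x x' = K x' x) (hL : ∀ y y', L y y' = L y' y)
    (a b : X × Y) : prodKernel K L a b = prodKernel K L b a := by
  rw [prodKernel, prodKernel, hK, hL]

theorem abs_prodKernel_le {BK BL : ℝ} (hK : ∀ x x', |K x x'| ≤ BK) (hL : ∀ y y', |L y y'| ≤ BL)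
    (a b : X × Y) : |prodKernel K L a b| ≤ BK * BL := by
  rw [prodKernel, abs_mul]
  exact mul_le_mul (hK _ _) (hL _ _) (abs_nonneg _) ((abs_nonneg _).trans (hK a.1 b.1))

variable [MeasurableSpace X] [MeasurableSpace Y]

theorem measurable_prodKernel (hK : Measurable (uncurry K)) (hL : Measurable (uncurry L)) :
    Measurable (uncurry (prodKernel K L)) :=
  (hK.apply₂ measurable_fst.fst measurable_snd.fst).mul
    (hL.apply₂ measurable_fst.snd measurable_snd.snd)

theorem integral_prodKernel_left_eq_zero {Px : Measure X} (Py : Measure Y) [SFinite Px]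
    [SFinite Py] (hK : ∀ x', ∫ x, K x x' ∂Px = 0) (b : X × Y) :
    ∫ a, prodKernel K L a b ∂(Px.prod Py) = 0 := by
  simp only [prodKernel]
  rw [integral_prod_mul (fun x => K x b.1) (fun y => L y b.2), hK, zero_mul]

end ProductKernel

end UStatistic

theorem third_moment_offdiag_sum_general
    {X Y : Type*} [MeasurableSpace X] [MeasurableSpace Y]
    (Px : Measure X) (Py : Measure Y)
    [IsProbabilityMeasure Px] [IsProbabilityMeasure Py]
    {Ω : Type*} [MeasurableSpace Ω] (μ : Measure Ω) [IsProbabilityMeasure μ]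
    (Ktil : X → X → ℝ) (Ltil : Y → Y → ℝ)
    (hKmeas : Measurable (Function.uncurry Ktil))
    (hLmeas : Measurable (Function.uncurry Ltil))
    (hKsymm : ∀ x x', Ktil x x' = Ktil x' x) (hLsymm : ∀ y y', Ltil y y' = Ltil y' y)
    (BK BL : ℝ) (hKbdd : ∀ x x', |Ktil x x'| ≤ BK) (hLbdd : ∀ y y', |Ltil y y'| ≤ BL)
    (hKcent : ∀ x', (∫ x, Ktil x x' ∂Px) = 0)
    (n : ℕ)
    (w : Fin n → Ω → X × Y) (hwmeas : ∀ i, Measurable (w i))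
    (hwiid : iIndepFun w μ)
    (hwlaw : ∀ i, μ.map (w i) = Px.prod Py)
    (Bsum : Ω → ℝ)
    (hBsum : ∀ ω, Bsum ω =
      ∑ q ∈ Finset.univ.filter (fun q : Fin n × Fin n => q.1 < q.2),
        Ktil (w q.1 ω).1 (w q.2 ω).1 * Ltil (w q.1 ω).2 (w q.2 ω).2)
    (M₃ N₃ : ℝ)
    (hM₃ : M₃ = ∫ q : X × X × X,
      Ktil q.1 q.2.1 * Ktil q.2.1 q.2.2 * Ktil q.2.2 q.1 ∂(Px.prod (Px.prod Px)))
    (hN₃ : N₃ = ∫ q : Y × Y × Y,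
      Ltil q.1 q.2.1 * Ltil q.2.1 q.2.2 * Ltil q.2.2 q.1 ∂(Py.prod (Py.prod Py))) :
    ((∫ q : (X × Y) × (X × Y) × (X × Y),
        (Ktil q.1.1 q.2.1.1 * Ltil q.1.2 q.2.1.2) *
          (Ktil q.2.1.1 q.2.2.1 * Ltil q.2.1.2 q.2.2.2) *
            (Ktil q.2.2.1 q.1.1 * Ltil q.2.2.2 q.1.2)
          ∂((Px.prod Py).prod ((Px.prod Py).prod (Px.prod Py)))) = M₃ * N₃) ∧
    (∫ ω, (Bsum ω) ^ 3 ∂μ) =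
      ((n : ℝ) * ((n : ℝ) - 1) / 2) *
          (∫ q : (X × Y) × (X × Y),
            (Ktil q.1.1 q.2.1 * Ltil q.1.2 q.2.2) ^ 3
              ∂((Px.prod Py).prod (Px.prod Py)))
        + (n : ℝ) * ((n : ℝ) - 1) * ((n : ℝ) - 2) * (M₃ * N₃) := by
  have hcycle : ∫ q : (X × Y) × (X × Y) × (X × Y),
      (Ktil q.1.1 q.2.1.1 * Ltil q.1.2 q.2.1.2) * (Ktil q.2.1.1 q.2.2.1 * Ltil q.2.1.2 q.2.2.2) *
        (Ktil q.2.2.1 q.1.1 * Ltil q.2.2.2 q.1.2)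
      ∂((Px.prod Py).prod ((Px.prod Py).prod (Px.prod Py))) = M₃ * N₃ := by
    rw [hM₃, hN₃, ← integral_prod_prod_prod_mul]
    congr 1 with q
    ring
  refine ⟨hcycle, ?_⟩
  have hB : Bsum = fun ω => ∑ q ∈ UStatistic.ltPairs (Fin n),
      UStatistic.prodKernel Ktil Ltil (w q.1 ω) (w q.2 ω) := funext hBsum
  rw [hB, UStatistic.integral_sum_ltPairs_pow_three hwmeas hwiid hwlaw
    (UStatistic.measurable_prodKernel hKmeas hLmeas) (UStatistic.abs_prodKernel_le hKbdd hLbdd)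
    (UStatistic.integral_prodKernel_left_eq_zero Py hKcent)
    (UStatistic.prodKernel_comm hKsymm hLsymm), Fintype.card_fin,
    ← hcycle]
  rfl

/-- Third moment of ∑_{i<j} B_{ij}:
E[(∑_{i<j}B_{ij})³] = (n(n-1)/2)E[B₁₂³] + n(n-1)(n-2)·M₃N₃, where E[B₁₂B₂₃B₃₁] = M₃N₃. -/
theorem third_moment_offdiag_sum
    {X Y : Type*} [MeasurableSpace X] [MeasurableSpace Y]
    (Px : Measure X) (Py : Measure Y)
    [IsProbabilityMeasure Px] [IsProbabilityMeasure Py]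
    {Ω : Type*} [MeasurableSpace Ω] (μ : Measure Ω) [IsProbabilityMeasure μ]
    (Ktil : X → X → ℝ) (Ltil : Y → Y → ℝ)
    (hKmeas : Measurable (Function.uncurry Ktil))
    (hLmeas : Measurable (Function.uncurry Ltil))
    (hKsymm : ∀ x x', Ktil x x' = Ktil x' x) (hLsymm : ∀ y y', Ltil y y' = Ltil y' y)
    (BK BL : ℝ) (hKbdd : ∀ x x', |Ktil x x'| ≤ BK) (hLbdd : ∀ y y', |Ltil y y'| ≤ BL)
    (hKcent : ∀ x', (∫ x, Ktil x x' ∂Px) = 0)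
    (hLcent : ∀ y', (∫ y, Ltil y y' ∂Py) = 0)
    (n : ℕ) (hn : 3 ≤ n)
    (w : Fin n → Ω → X × Y) (hwmeas : ∀ i, Measurable (w i))
    (hwiid : iIndepFun w μ)
    (hwlaw : ∀ i, μ.map (w i) = Px.prod Py)
    (Bsum : Ω → ℝ)
    (hBsum : ∀ ω, Bsum ω =
      ∑ q ∈ Finset.univ.filter (fun q : Fin n × Fin n => q.1 < q.2),
        Ktil (w q.1 ω).1 (w q.2 ω).1 * Ltil (w q.1 ω).2 (w q.2 ω).2)
    (M₃ N₃ : ℝ)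
    (hM₃ : M₃ = ∫ q : X × X × X,
      Ktil q.1 q.2.1 * Ktil q.2.1 q.2.2 * Ktil q.2.2 q.1 ∂(Px.prod (Px.prod Px)))
    (hN₃ : N₃ = ∫ q : Y × Y × Y,
      Ltil q.1 q.2.1 * Ltil q.2.1 q.2.2 * Ltil q.2.2 q.1 ∂(Py.prod (Py.prod Py))) :
    ((∫ q : (X × Y) × (X × Y) × (X × Y),
        (Ktil q.1.1 q.2.1.1 * Ltil q.1.2 q.2.1.2) *
          (Ktil q.2.1.1 q.2.2.1 * Ltil q.2.1.2 q.2.2.2) *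
            (Ktil q.2.2.1 q.1.1 * Ltil q.2.2.2 q.1.2)
          ∂((Px.prod Py).prod ((Px.prod Py).prod (Px.prod Py)))) = M₃ * N₃) ∧
    (∫ ω, (Bsum ω) ^ 3 ∂μ) =
      ((n : ℝ) * ((n : ℝ) - 1) / 2) *
          (∫ q : (X × Y) × (X × Y),
            (Ktil q.1.1 q.2.1 * Ltil q.1.2 q.2.2) ^ 3
              ∂((Px.prod Py).prod (Px.prod Py)))
        + (n : ℝ) * ((n : ℝ) - 1) * ((n : ℝ) - 2) * (M₃ * N₃) :=
  third_moment_offdiag_sum_general Px Py μ Ktil Ltil hKmeas hLmeas hKsymm hLsymm BK BL hKbdd hLbdd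
    hKcent n w hwmeas hwiid hwlaw Bsum hBsum M₃ N₃ hM₃ hN₃
end
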